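/- arXiv:2504.04933 — 2 statements merged into one kernel-verified Lean document; each statement's English description precedes it below -/
import Mathlib

section
/- Fix real constants m₀ > 0, ω > 0, ħ > 0, a > -1 and set λ₀ = √(m₀ω/ħ). Define, for complex-valued f and x ≠ 0, the deformed position operator (X̃f)(x) = √m₀·λ₀^a·|x|^a·x·f(x) and the deformed momentum operator (P̃f)(x) = -iħ·(λ₀^a√m₀)⁻¹·(|x|^{-a}·f'(x) - (a/2)·|x|^{-a-2}·x·f(x)). Then for every f : ℝ → ℂ differentiable at a point x ≠ 0, the commutator satisfies P̃(X̃f)(x) - X̃(P̃f)(x) = -iħ·(1+a)·f(x). -/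
/-- The deformed position operator `(X̃f)(x) = √m₀·λ₀^a·|x|^a·x·f(x)`. -/
noncomputable def Xop (m₀ lam a : ℝ) (f : ℝ → ℂ) (x : ℝ) : ℂ :=
  ((Real.sqrt m₀ * lam ^ a * |x| ^ a * x : ℝ) : ℂ) * f x

/-- The deformed momentum operator
`(P̃f)(x) = -ihbar·(λ₀^a√m₀)⁻¹·(|x|^(-a)·f'(x) - (a/2)·|x|^(-a-2)·x·f(x))`. -/
noncomputable def Pop (hbar m₀ lam a : ℝ) (f : ℝ → ℂ) (x : ℝ) : ℂ :=
  (-Complex.I) * (hbar : ℂ) * (((lam ^ a * Real.sqrt m₀ : ℝ) : ℂ))⁻¹ *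
    (((|x| ^ (-a) : ℝ) : ℂ) * deriv f x
      - ((a / 2 : ℝ) : ℂ) * ((|x| ^ (-a - 2) : ℝ) : ℂ) * (x : ℂ) * f x)

/-! The multiplicative terms of `P̃` commute with `X̃`, so `[P̃, X̃] f` is `-iħ κ⁻¹ |x|^(-a)` times
the derivative of the multiplier `κ |x|^a x` of `X̃` (with `κ = λ₀^a √m₀`), times `f`. That
derivative is `κ (1 + a) |x|^a`, and `|x|^(-a) |x|^a = 1` for `x ≠ 0`. -/

theorem hasDerivAt_abs_rpow_mul_self (a : ℝ) {x : ℝ} (hx : x ≠ 0) :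
    HasDerivAt (fun y : ℝ => |y| ^ a * y) ((a + 1) * |x| ^ a) x := by
  have hx' : |x| ≠ 0 := abs_ne_zero.2 hx
  refine (((hasDerivAt_abs hx).rpow_const (p := a) (Or.inl hx')).mul
    (hasDerivAt_id x)).congr_deriv ?_
  calc _ = a * (|x| ^ a / |x|) * (SignType.sign x * x) + |x| ^ a := by
        rw [← Real.rpow_sub_one hx']; simp only [id]; ring
    _ = (a + 1) * |x| ^ a := by rw [sign_mul_self]; field_simp

theorem hasDerivAt_Xop (m₀ lam a : ℝ) {f : ℝ → ℂ} {x : ℝ} (hx : x ≠ 0)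
    (hf : DifferentiableAt ℝ f x) :
    HasDerivAt (Xop m₀ lam a f)
      (((Real.sqrt m₀ * lam ^ a : ℝ) : ℂ) *
        (((a + 1) * |x| ^ a : ℝ) * f x + ((|x| ^ a * x : ℝ) : ℂ) * deriv f x)) x := by
  have hXop : Xop m₀ lam a f =
      fun y => ((Real.sqrt m₀ * lam ^ a * (|y| ^ a * y) : ℝ) : ℂ) * f y :=
    funext fun y => by simp only [Xop, mul_assoc]
  rw [hXop]
  refine ((((hasDerivAt_abs_rpow_mul_self a hx).const_mul
    (Real.sqrt m₀ * lam ^ a)).ofReal_comp).mul hf.hasDerivAt).congr_deriv ?_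
  push_cast
  ring

theorem stmt1_general (m₀ ω hbar a : ℝ) (hm₀ : 0 < m₀) (hω : 0 < ω) (hhb : 0 < hbar)
    (lam : ℝ) (hlam : lam = Real.sqrt (m₀ * ω / hbar))
    (f : ℝ → ℂ) (x : ℝ) (hx : x ≠ 0) (hf : DifferentiableAt ℝ f x) :
    Pop hbar m₀ lam a (Xop m₀ lam a f) x - Xop m₀ lam a (Pop hbar m₀ lam a f) x
      = (-Complex.I) * (hbar : ℂ) * ((1 + a : ℝ) : ℂ) * f x := by
  have hlam_pos : 0 < lam := hlam ▸ Real.sqrt_pos.2 (by positivity)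
  have hκ : ((lam ^ a * Real.sqrt m₀ : ℝ) : ℂ)⁻¹ * ((lam ^ a * Real.sqrt m₀ : ℝ) : ℂ) = 1 :=
    inv_mul_cancel₀ (Complex.ofReal_ne_zero.2 (by positivity))
  have hpow : ((|x| ^ (-a) : ℝ) : ℂ) * ((|x| ^ a : ℝ) : ℂ) = 1 := by
    rw [← Complex.ofReal_mul, ← Real.rpow_add (abs_pos.2 hx), neg_add_cancel, Real.rpow_zero,
      Complex.ofReal_one]
  simp only [Pop, Xop, (hasDerivAt_Xop m₀ lam a hx hf).deriv]
  push_cast at hκ ⊢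
  linear_combination (-Complex.I * hbar * (1 + a) * f x) *
    (((|x| ^ (-a) : ℝ) : ℂ) * ((|x| ^ a : ℝ) : ℂ) * hκ + hpow)

/-- the commutator `[P̃, X̃] = -ihbar(1+a)` at every point `x ≠ 0` where `f` is
differentiable. -/
theorem stmt1 (m₀ ω hbar a : ℝ) (hm₀ : 0 < m₀) (hω : 0 < ω) (hhb : 0 < hbar) (ha : -1 < a)
    (lam : ℝ) (hlam : lam = Real.sqrt (m₀ * ω / hbar))
    (f : ℝ → ℂ) (x : ℝ) (hx : x ≠ 0) (hf : DifferentiableAt ℝ f x) :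
    Pop hbar m₀ lam a (Xop m₀ lam a f) x - Xop m₀ lam a (Pop hbar m₀ lam a f) x
      = (-Complex.I) * (hbar : ℂ) * ((1 + a : ℝ) : ℂ) * f x :=
  stmt1_general m₀ ω hbar a hm₀ hω hhb lam hlam f x hx hf
end

section
/- Fix real constants λ₀ > 0, a > -1, γ > 1/2, set α' = (1/2)·( (2γ-1)/(a+1) + 1 ), and for a nonnegative integer m let L_m^{(α')}(t) = Σ_{k=0}^{m} (-1)^k · Γ(m+α'+1) / ( Γ(k+α'+1)·(m-k)!·k! ) · t^k. Then ∫_{-∞}^{+∞} (λ₀²x²)^{(3a+2γ-1)/2}·x²·exp( -(λ₀²x²)^{a+1}/(a+1) )·[ L_m^{(α')}( (λ₀²x²)^{a+1}/(a+1) ) ]² dx = (a+1)^{α'}·Γ(m+α'+1) / ( λ₀³·m! ). -/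
/-
The substitutions `t = λ₀²x²` and then `y = t^(a+1)/(a+1)` turn the integral into
`λ₀⁻³ (a+1)^α' ∫₀^∞ y^α' e^(-y) L_m(y)² dy`, so everything reduces to the norm of the Laguerre
polynomial. Expanding one factor `L_m` into monomials and integrating against the Gamma weight, that
norm becomes `Σ_k c_k Σ_l c_l Γ(α'+k+l+1)`. For fixed `k`, `Γ(α'+k+l+1)/Γ(α'+l+1)` is a monic
polynomial of degree `k` in `l`, so the inner sum is an `m`-th forward difference of it: it
vanishes for `k < m`, and only the leading coefficient survives for `k = m`.
-/

/-- The generalized Laguerre polynomial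
`L_m^(α)(t) = Σ_{k=0}^{m} (-1)^k·Γ(m+α+1)/(Γ(k+α+1)·(m-k)!·k!)·t^k`. -/
noncomputable def lagPoly (α : ℝ) (m : ℕ) (t : ℝ) : ℝ :=
  ∑ k ∈ Finset.range (m + 1),
    (-1 : ℝ) ^ k * Real.Gamma ((m : ℝ) + α + 1)
      / (Real.Gamma ((k : ℝ) + α + 1) * (Nat.factorial (m - k) : ℝ) * (Nat.factorial k : ℝ))
      * t ^ k

open MeasureTheory
open Set Finset Polynomial Real Nat

theorem sum_range_neg_one_pow_mul_choose_mul_eval {R : Type*} [CommRing R] {m : ℕ} (P : R[X])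
    (hP : P.natDegree ≤ m) :
    ∑ l ∈ range (m + 1), (-1) ^ (m - l) * (m.choose l : R) * P.eval (l : R) = m ! * P.coeff m := by
  have h := fwdDiff_iter_eq_sum_shift (h := (1 : R)) P.eval m 0
  simp only [zero_add, nsmul_one, zsmul_eq_mul, Int.cast_mul, Int.cast_pow, Int.cast_neg,
    Int.cast_one, Int.cast_natCast] at h
  rw [← h]
  rcases hP.lt_or_eq with hlt | rfl
  · rw [coeff_eq_zero_of_natDegree_lt hlt, mul_zero, fwdDiff_iter_eq_zero_of_degree_lt hlt]
    rfl
  · rw [P.fwdDiff_iter_degree_eq_factorial, Pi.smul_apply, Pi.natCast_apply, smul_eq_mul, mul_comm]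
    rfl

theorem Real.Gamma_add_nat_eq_mul_ascPochhammer {x : ℝ} (hx : 0 < x) (n : ℕ) :
    Gamma (x + n) = Gamma x * (ascPochhammer ℝ n).eval x := by
  induction n with
  | zero => simp
  | succ n ih =>
    rw [Nat.cast_succ, ← add_assoc, Gamma_add_one (by positivity), ih, ascPochhammer_succ_right,
      eval_mul, eval_add, eval_X, eval_natCast]
    ring

noncomputable def lagCoeff (α : ℝ) (m k : ℕ) : ℝ :=
  (-1) ^ k * Gamma (m + α + 1) / (Gamma (k + α + 1) * (m - k)! * k !)

theorem lagPoly_eq_sum (α : ℝ) (m : ℕ) (t : ℝ) :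
    lagPoly α m t = ∑ k ∈ range (m + 1), lagCoeff α m k * t ^ k := rfl

theorem lagCoeff_mul_Gamma {α : ℝ} (hα : -1 < α) {m l : ℕ} (hl : l ≤ m) (k : ℕ) :
    lagCoeff α m l * Gamma (α + k + l + 1) = (-1) ^ m * (Gamma (m + α + 1) / m !) *
      ((-1) ^ (m - l) * m.choose l *
        ((ascPochhammer ℝ k).comp (X + C (α + 1))).eval (l : ℝ)) := by
  obtain ⟨j, rfl⟩ := Nat.exists_eq_add_of_le hl
  have hsign : (-1 : ℝ) ^ l = (-1) ^ (l + j) * (-1) ^ j := by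
    rw [← pow_add, add_assoc, ← two_mul, pow_add, pow_mul, neg_one_sq, one_pow, mul_one]
  have hΓ : Gamma (α + k + l + 1) = Gamma (l + α + 1) * (ascPochhammer ℝ k).eval (l + α + 1) := by
    rw [← Gamma_add_nat_eq_mul_ascPochhammer (by linarith)]
    ring_nf
  have hΓl : Gamma (l + α + 1) ≠ 0 := (Gamma_pos_of_pos (by linarith)).ne'
  rw [hΓ, eval_comp, eval_add, eval_X, eval_C, Nat.cast_choose ℝ hl, lagCoeff,
    Nat.add_sub_cancel_left]
  field_simp
  rw [hsign, add_assoc (l : ℝ)]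
  ring

theorem sum_lagCoeff_mul_Gamma {α : ℝ} (hα : -1 < α) {m k : ℕ} (hk : k ≤ m) :
    ∑ l ∈ range (m + 1), lagCoeff α m l * Gamma (α + k + l + 1) =
      if k = m then (-1) ^ m * Gamma (m + α + 1) else 0 := by
  set Q : ℝ[X] := (ascPochhammer ℝ k).comp (X + C (α + 1))
  have hQ : Q.Monic := (monic_ascPochhammer ℝ k).comp_X_add_C _
  have hQdeg : Q.natDegree = k := by
    rw [natDegree_comp, ascPochhammer_natDegree, natDegree_X_add_C, mul_one]
  rw [sum_congr rfl fun l hl => lagCoeff_mul_Gamma hα (Nat.lt_succ_iff.mp (mem_range.mp hl)) k,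
    ← mul_sum, sum_range_neg_one_pow_mul_choose_mul_eval Q (hQdeg ▸ hk)]
  split_ifs with hkm
  · subst hkm
    rw [← hQdeg, coeff_natDegree, hQ.leadingCoeff]
    field_simp
  · rw [coeff_eq_zero_of_natDegree_lt (by omega), mul_zero, mul_zero]

theorem rpow_mul_exp_neg_mul_pow_eqOn {α : ℝ} (n : ℕ) :
    EqOn (fun y : ℝ => y ^ α * exp (-y) * y ^ n) (fun y => exp (-y) * y ^ (α + n + 1 - 1))
      (Ioi 0) := fun y (hy : 0 < y) => by
  dsimp only
  rw [add_sub_cancel_right, rpow_add hy, rpow_natCast]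
  ring

theorem integrableOn_rpow_mul_exp_neg_mul_pow {α : ℝ} (hα : -1 < α) (n : ℕ) :
    IntegrableOn (fun y : ℝ => y ^ α * exp (-y) * y ^ n) (Ioi 0) :=
  (GammaIntegral_convergent (by linarith [n.cast_nonneg (α := ℝ)])).congr_fun
    (rpow_mul_exp_neg_mul_pow_eqOn n).symm measurableSet_Ioi

theorem integral_rpow_mul_exp_neg_mul_pow {α : ℝ} (hα : -1 < α) (n : ℕ) :
    ∫ y in Ioi 0, y ^ α * exp (-y) * y ^ n = Gamma (α + n + 1) := by
  rw [Gamma_eq_integral (by linarith [n.cast_nonneg (α := ℝ)])]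
  exact setIntegral_congr_fun measurableSet_Ioi (rpow_mul_exp_neg_mul_pow_eqOn n)

theorem integral_rpow_mul_exp_neg_mul_sum_sq {α : ℝ} (hα : -1 < α) (c : ℕ → ℝ) (n : ℕ) :
    ∫ y in Ioi 0, y ^ α * exp (-y) * (∑ k ∈ range n, c k * y ^ k) ^ 2 =
      ∑ k ∈ range n, ∑ l ∈ range n, c k * c l * Gamma (α + k + l + 1) := by
  have hexpand : ∀ y : ℝ, y ^ α * exp (-y) * (∑ k ∈ range n, c k * y ^ k) ^ 2 =
      ∑ k ∈ range n, ∑ l ∈ range n, c k * c l * (y ^ α * exp (-y) * y ^ (k + l)) := by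
    intro y
    simp_rw [sq, sum_mul_sum, mul_sum, pow_add]
    exact sum_congr rfl fun k _ => sum_congr rfl fun l _ => by ring
  have hint : ∀ k l : ℕ,
      IntegrableOn (fun y : ℝ => c k * c l * (y ^ α * exp (-y) * y ^ (k + l))) (Ioi 0) :=
    fun k l => (integrableOn_rpow_mul_exp_neg_mul_pow hα (k + l)).const_mul _
  simp_rw [hexpand]
  rw [integral_finsetSum _ fun k _ => integrable_finsetSum _ fun l _ => hint k l]
  refine sum_congr rfl fun k _ => ?_
  rw [integral_finsetSum _ fun l _ => hint k l]
  refine sum_congr rfl fun l _ => ?_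
  rw [integral_const_mul, integral_rpow_mul_exp_neg_mul_pow hα, Nat.cast_add, ← add_assoc]

theorem integral_rpow_mul_exp_neg_mul_lagPoly_sq {α : ℝ} (hα : -1 < α) (m : ℕ) :
    ∫ y in Ioi 0, y ^ α * exp (-y) * lagPoly α m y ^ 2 = Gamma (m + α + 1) / m ! := by
  simp_rw [lagPoly_eq_sum, integral_rpow_mul_exp_neg_mul_sum_sq hα, mul_assoc (lagCoeff α m _),
    ← mul_sum]
  rw [sum_congr rfl fun k hk => by
      rw [sum_lagCoeff_mul_Gamma hα (Nat.lt_succ_iff.mp (mem_range.mp hk))],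
    sum_eq_single_of_mem m (self_mem_range_succ m) fun k _ hkm => by rw [if_neg hkm, mul_zero],
    if_pos rfl, lagCoeff, Nat.sub_self, Nat.factorial_zero]
  have hΓ : Gamma (m + α + 1) ≠ 0 := (Gamma_pos_of_pos (by linarith [m.cast_nonneg (α := ℝ)])).ne'
  field_simp
  rw [← pow_mul, pow_mul', neg_one_sq, one_pow, Nat.cast_one]

theorem integral_comp_mul_sq_mul_sq (g : ℝ → ℝ) {c : ℝ} (hc : 0 < c) :
    ∫ x, g (c ^ 2 * x ^ 2) * x ^ 2 = (∫ t in Ioi 0, √t * g t) / c ^ 3 := by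
  have heven := integral_comp_abs (f := fun x => g (c ^ 2 * x ^ 2) * x ^ 2)
  simp only [sq_abs] at heven
  have hsq : ∫ t in Ioi 0, √t * g t = ∫ u in Ioi 0, 2 * (g (u ^ 2) * u ^ 2) := by
    rw [← integral_comp_rpow_Ioi_of_pos (g := fun t => √t * g t) two_pos]
    refine setIntegral_congr_fun measurableSet_Ioi fun u (hu : 0 < u) => ?_
    rw [rpow_two, sqrt_sq hu.le, smul_eq_mul, show (2 : ℝ) - 1 = 1 by norm_num, rpow_one]
    ring
  have hscale := integral_comp_mul_left_Ioi (fun u => 2 * (g (u ^ 2) * u ^ 2)) 0 hc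
  rw [mul_zero, smul_eq_mul, ← hsq] at hscale
  have hpull : ∫ u in Ioi 0, 2 * (g ((c * u) ^ 2) * (c * u) ^ 2) =
      c ^ 2 * (2 * ∫ x in Ioi 0, g (c ^ 2 * x ^ 2) * x ^ 2) := by
    rw [← integral_const_mul, ← integral_const_mul]
    congr 1 with x
    rw [mul_pow]
    ring
  rw [heven, eq_div_iff (by positivity),
    ← mul_inv_cancel_left₀ hc.ne' (∫ t in Ioi 0, √t * g t), ← hscale, hpull]
  ring

theorem integral_rpow_mul_comp_rpow_div (g : ℝ → ℝ) {p c : ℝ} (β : ℝ) (hp : 0 < p) (hc : 0 < c) :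
    ∫ t in Ioi 0, t ^ (p * (β + 1) - 1) * g (t ^ p / c) =
      c ^ (β + 1) / p * ∫ y in Ioi 0, y ^ β * g y := by
  have hscale := integral_comp_mul_left_Ioi (fun y => y ^ β * g y) 0 (inv_pos.mpr hc)
  rw [mul_zero, smul_eq_mul, inv_inv, setIntegral_congr_fun measurableSet_Ioi
    (g := fun y => (c ^ β)⁻¹ * (y ^ β * g (y / c))) fun y (hy : 0 < y) => by
      rw [mul_rpow (inv_nonneg.mpr hc.le) hy.le, inv_rpow hc.le, inv_mul_eq_div c y]
      ring,
    integral_const_mul, inv_mul_eq_iff_eq_mul₀ (rpow_pos_of_pos hc β).ne'] at hscale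
  have hsub := integral_comp_rpow_Ioi_of_pos (g := fun y => y ^ β * g (y / c)) hp
  rw [setIntegral_congr_fun measurableSet_Ioi
    (g := fun t => p⁻¹ * ((p * t ^ (p - 1)) • ((t ^ p) ^ β * g (t ^ p / c))))
    fun t (ht : 0 < t) => ?_, integral_const_mul, hsub, hscale, rpow_add_one hc.ne']
  · ring
  · have hexp : t ^ (p * (β + 1) - 1) = t ^ (p - 1) * (t ^ p) ^ β := by
      rw [← rpow_mul ht.le, ← rpow_add ht]
      ring_nf
    simp only [smul_eq_mul, hexp]
    field_simp

/-- the squared L²-norm of the odd parabose stationary states: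
`∫ (λ₀²x²)^((3a+2γ-1)/2)·x²·exp(-(λ₀²x²)^(a+1)/(a+1))·[L_m^(α')((λ₀²x²)^(a+1)/(a+1))]² dx
  = (a+1)^(α')·Γ(m+α'+1)/(λ₀³·m!)` with `α' = ((2γ-1)/(a+1) + 1)/2`. -/
theorem stmt19 (lam a γ : ℝ) (hlam : 0 < lam) (ha : -1 < a) (hγ : 1 / 2 < γ) (m : ℕ) :
    ∫ x : ℝ,
        (lam ^ 2 * x ^ 2) ^ ((3 * a + 2 * γ - 1) / 2) * x ^ 2
          * Real.exp (-((lam ^ 2 * x ^ 2) ^ (a + 1)) / (a + 1))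
          * (lagPoly ((1 / 2) * ((2 * γ - 1) / (a + 1) + 1)) m
              ((lam ^ 2 * x ^ 2) ^ (a + 1) / (a + 1))) ^ 2
      = (a + 1) ^ ((1 / 2) * ((2 * γ - 1) / (a + 1) + 1))
          * Real.Gamma ((m : ℝ) + (1 / 2) * ((2 * γ - 1) / (a + 1) + 1) + 1)
          / (lam ^ 3 * (Nat.factorial m : ℝ)) := by
  set α := (1 / 2) * ((2 * γ - 1) / (a + 1) + 1) with hα_def
  have ha1 : 0 < a + 1 := by linarith
  have hα : -1 < α := by
    have : 0 < (2 * γ - 1) / (a + 1) := div_pos (by linarith) ha1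
    linarith
  have hexp : 1 / 2 + (3 * a + 2 * γ - 1) / 2 = (a + 1) * (α + 1) - 1 := by
    rw [hα_def]
    field_simp
    ring
  have hpolar := integral_comp_mul_sq_mul_sq (fun t => t ^ ((3 * a + 2 * γ - 1) / 2) *
    exp (-(t ^ (a + 1)) / (a + 1)) * lagPoly α m (t ^ (a + 1) / (a + 1)) ^ 2) hlam
  have hsub := integral_rpow_mul_comp_rpow_div (fun y => exp (-y) * lagPoly α m y ^ 2) α ha1 ha1
  simp_rw [← mul_assoc, integral_rpow_mul_exp_neg_mul_lagPoly_sq hα] at hsub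
  calc _ = (∫ t in Ioi 0, √t * (t ^ ((3 * a + 2 * γ - 1) / 2) * exp (-(t ^ (a + 1)) / (a + 1)) *
          lagPoly α m (t ^ (a + 1) / (a + 1)) ^ 2)) / lam ^ 3 := by
        rw [← hpolar]
        congr 1 with x
        ring
    _ = (a + 1) ^ (α + 1) / (a + 1) * (Gamma (m + α + 1) / m !) / lam ^ 3 := by
        rw [← hsub]
        congr 1
        refine setIntegral_congr_fun measurableSet_Ioi fun t (ht : 0 < t) => ?_
        rw [sqrt_eq_rpow, ← hexp, rpow_add ht (1 / 2), neg_div]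
        ring
    _ = _ := by
        rw [rpow_add_one ha1.ne']
        field_simp
end
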